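/- arXiv:2205.00784 — 2 statements merged into one kernel-verified Lean document; each statement's English description precedes it below -/
import Mathlib

section
/- Model update by observation words is compositional: for any epistemic expectation model M and words w, w', the update (M|_w)|_{w'} has the same set of surviving worlds as M|_{w ++ w'}, and the expectation languages at corresponding surviving worlds coincide, i.e. for each surviving world s, L(Exp_{(M|_w)|_{w'}}(s)) = L(Exp_{M|_{w++w'}}(s)). -/
def leftQuot {σ : Type*} (L : Language σ) (w : List σ) : Language σ :=
  {v | w ++ v ∈ L}

theorem update_compositional {S σ : Type*} (Exp : S → Language σ) (w w' : List σ) :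
    ({s | (leftQuot (Exp s) w).Nonempty ∧ (leftQuot (leftQuot (Exp s) w) w').Nonempty}
        = {s | (leftQuot (Exp s) (w ++ w')).Nonempty}) ∧
      ∀ s : S, leftQuot (leftQuot (Exp s) w) w' = leftQuot (Exp s) (w ++ w') := by
  have key : ∀ s : S, leftQuot (leftQuot (Exp s) w) w' = leftQuot (Exp s) (w ++ w') := by
    intro s
    ext v
    show w ++ (w' ++ v) ∈ Exp s ↔ w ++ w' ++ v ∈ Exp s; rw [List.append_assoc]
  refine ⟨?_, key⟩
  ext s
  simp only [Set.mem_setOf_eq, key s]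
  constructor
  · rintro ⟨_, h⟩; exact h
  · rintro ⟨v, hv⟩
    exact ⟨⟨w' ++ v, by simpa [leftQuot, List.append_assoc] using hv⟩, ⟨v, hv⟩⟩
end

section
/- Pumping bound for updates: let M be an epistemic expectation model with finitely many worlds, where each Exp(s) is recognized by a DFA with state set Q_s, and let π be a regular language recognized by a DFA with state set Q_π. If there exists a word w ∈ π such that the updated model M|_w equals a given model M', then there exists such a word w of length at most |Q_π| · ∏_{s ∈ S} |Q_s|. -/
private lemma leftQuot_accepts {α σ : Type*} (M : DFA α σ) (w : List α) :
    leftQuot M.accepts w = {v | M.evalFrom (M.eval w) v ∈ M.accept} := by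
  ext v
  simp only [leftQuot, Set.mem_setOf_eq, DFA.mem_accepts, DFA.eval,
    DFA.evalFrom_of_append]

private lemma exists_short_word {α σ : Type*} [Fintype σ] (M : DFA α σ) (w : List α) :
    ∃ w', w'.length ≤ Fintype.card σ ∧ M.eval w' = M.eval w := by
  by_cases hlen : Fintype.card σ ≤ w.length
  · obtain ⟨q, a, b, c, hx, hab, hb, ha, hbq, hc⟩ :=
      M.evalFrom_split (s := M.start) (t := M.eval w) hlen rfl
    have hlt : (a ++ c).length < w.length := by
      subst hx
      simp only [List.length_append]
      have : 0 < b.length := List.length_pos_iff.mpr hb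
      omega
    have heval : M.eval (a ++ c) = M.eval w := by
      unfold DFA.eval
      rw [DFA.evalFrom_of_append, ha, hc]
      rfl
    obtain ⟨w', hw1, hw2⟩ := exists_short_word M (a ++ c)
    exact ⟨w', hw1, hw2.trans heval⟩
  · exact ⟨w, by omega, rfl⟩
termination_by w.length
decreasing_by exact hlt

private def prodDFA {α S : Type*} (Q : S → Type*) (D : (s : S) → DFA α (Q s))
    {Qπ : Type*} (Dπ : DFA α Qπ) : DFA α (Qπ × ∀ s, Q s) where
  step := fun p a => (Dπ.step p.1 a, fun s => (D s).step (p.2 s) a)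
  start := (Dπ.start, fun s => (D s).start)
  accept := Set.univ

private lemma prodDFA_evalFrom {α S : Type*} (Q : S → Type*) (D : (s : S) → DFA α (Q s))
    {Qπ : Type*} (Dπ : DFA α Qπ) (w : List α) (q : Qπ) (f : ∀ s, Q s) :
    (prodDFA Q D Dπ).evalFrom (q, f) w
      = (Dπ.evalFrom q w, fun s => (D s).evalFrom (f s) w) := by
  induction w generalizing q f with
  | nil => rfl
  | cons a w ih =>
      simp only [DFA.evalFrom, List.foldl_cons] at *
      exact ih _ _

private lemma prodDFA_eval {α S : Type*} (Q : S → Type*) (D : (s : S) → DFA α (Q s))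
    {Qπ : Type*} (Dπ : DFA α Qπ) (w : List α) :
    (prodDFA Q D Dπ).eval w = (Dπ.eval w, fun s => (D s).eval w) :=
  prodDFA_evalFrom Q D Dπ w _ _

theorem update_pumping_bound {α : Type*} {S : Type*} [Fintype S]
    (Q : S → Type*) [∀ s, Fintype (Q s)] (D : (s : S) → DFA α (Q s))
    {Qπ : Type*} [Fintype Qπ] (Dπ : DFA α Qπ)
    (S' : Set S) (E' : S → Language α)
    (h : ∃ w ∈ Dπ.accepts,
      ({s | (leftQuot ((D s).accepts) w).Nonempty} = S' ∧
        ∀ s ∈ S', leftQuot ((D s).accepts) w = E' s)) :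
    ∃ w ∈ Dπ.accepts,
      w.length ≤ Fintype.card Qπ * ∏ s : S, Fintype.card (Q s) ∧
      ({s | (leftQuot ((D s).accepts) w).Nonempty} = S' ∧
        ∀ s ∈ S', leftQuot ((D s).accepts) w = E' s) := by
  classical
  obtain ⟨w, hwπ, hS', hE'⟩ := h
  obtain ⟨w', hlen, heval⟩ := exists_short_word (prodDFA Q D Dπ) w
  rw [prodDFA_eval, prodDFA_eval, Prod.mk.injEq] at heval
  obtain ⟨h1, h2⟩ := heval
  have h2' : ∀ s, (D s).eval w' = (D s).eval w := fun s => congrFun h2 s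
  have hq : ∀ s, leftQuot ((D s).accepts) w' = leftQuot ((D s).accepts) w := by
    intro s
    rw [leftQuot_accepts, leftQuot_accepts, h2' s]
  refine ⟨w', ?_, ?_, ?_, ?_⟩
  · rw [DFA.mem_accepts] at hwπ ⊢
    rwa [h1]
  · calc w'.length ≤ Fintype.card (Qπ × ∀ s, Q s) := hlen
      _ = Fintype.card Qπ * ∏ s : S, Fintype.card (Q s) := by
          rw [Fintype.card_prod, Fintype.card_pi]
  · rw [← hS']
    ext s
    simp [hq s]
  · intro s hs
    rw [hq s]
    exact hE' s hs
end
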